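/- arXiv:2002.06808 — 2 statements merged into one kernel-verified Lean document; each statement's English description precedes it below -/
import Mathlib

section
/- Let K_t(r) be the Riccati iterates K₀(r) := Q, K_{t+1}(r) := Q + Aᵀ( γK_t(r) − (γ²/(γ bᵀK_t(r) b + r)) K_t(r) b bᵀ K_t(r) )A, and suppose that for every r > 0 the iterates K_t(r) converge entrywise as t → ∞ to a matrix K(r). Then for every x ∈ ℝ^d, the optimal cost map r ↦ J*_r(x) := xᵀK(r) x + (γ/(1−γ)) ∫ nᵀK(r) n dμ(n) is concave and nondecreasing on (0,∞). -/
/-!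
For a positive semidefinite `K`, completing the square in the control `u` shows that
`vᵀ riccatiStep(K) v` is the minimum over `u` of `vᵀQv + r u² + γ (Av + ub)ᵀ K (Av + ub)`.
For fixed `u` and `v` this is affine in `r` plus `γ` times a quadratic form of `K`, so by
induction every `r ↦ vᵀ K_t(r) v` is a pointwise minimum of concave nondecreasing functions, hence
concave and nondecreasing. Both properties survive the limit `t → ∞` and integration against the
noise law (the second moment makes every quadratic form integrable), and `γ / (1 - γ) ≥ 0`.
-/

open MeasureTheory Matrix Filter

noncomputable section

/-- One step of the Riccati recursion with control penalty `r`: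
`K ↦ Q + Aᵀ( γK − (γ²/(γ bᵀK b + r)) K b bᵀ K )A`. -/
def riccatiStep {d : ℕ} (A Q : Matrix (Fin d) (Fin d) ℝ) (b : Fin d → ℝ) (γ r : ℝ)
    (K : Matrix (Fin d) (Fin d) ℝ) : Matrix (Fin d) (Fin d) ℝ :=
  Q + Aᵀ * (γ • K - (γ ^ 2 / (γ * (b ⬝ᵥ K.mulVec b) + r)) • (K * vecMulVec b b * K)) * A

/-- The Riccati iterates `K_0(r) = Q`, `K_{t+1}(r) = riccatiStep K_t(r)`. -/
def riccatiIter {d : ℕ} (A Q : Matrix (Fin d) (Fin d) ℝ) (b : Fin d → ℝ) (γ r : ℝ)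
    (t : ℕ) : Matrix (Fin d) (Fin d) ℝ :=
  (riccatiStep A Q b γ r)^[t] Q

section OrderLimits

variable {E : Type*} [AddCommGroup E] [Module ℝ E] {s : Set E}

theorem ConcaveOn.of_isLeast_range {ι : Type*} {g : ι → E → ℝ} {f : E → ℝ} (hs : Convex ℝ s)
    (hg : ∀ i, ConcaveOn ℝ s (g i)) (hf : ∀ x ∈ s, IsLeast (Set.range fun i => g i x) (f x)) :
    ConcaveOn ℝ s f := by
  refine ⟨hs, fun x hx y hy a c ha hc hac => ?_⟩
  obtain ⟨i, hi⟩ := (hf _ (hs hx hy ha hc hac)).1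
  rw [← hi]
  calc a • f x + c • f y ≤ a • g i x + c • g i y := by
        gcongr
        · exact (hf x hx).2 ⟨i, rfl⟩
        · exact (hf y hy).2 ⟨i, rfl⟩
    _ ≤ g i (a • x + c • y) := (hg i).2 hx hy ha hc hac

theorem MonotoneOn.of_isLeast_range {α ι : Type*} [Preorder α] {t : Set α} {g : ι → α → ℝ}
    {f : α → ℝ} (hg : ∀ i, MonotoneOn (g i) t)
    (hf : ∀ x ∈ t, IsLeast (Set.range fun i => g i x) (f x)) : MonotoneOn f t := by
  intro x hx y hy hxy
  obtain ⟨i, hi⟩ := (hf y hy).1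
  rw [← hi]
  exact ((hf x hx).2 ⟨i, rfl⟩).trans (hg i hx hy hxy)

theorem ConcaveOn.of_tendsto {ι : Type*} {l : Filter ι} [l.NeBot] {f : ι → E → ℝ} {g : E → ℝ}
    (hf : ∀ n, ConcaveOn ℝ s (f n)) (hlim : ∀ x ∈ s, Tendsto (fun n => f n x) l (nhds (g x))) :
    ConcaveOn ℝ s g := by
  obtain ⟨n⟩ := ‹l.NeBot›.nonempty_of_mem univ_mem
  refine ⟨(hf n).1, fun x hx y hy a c ha hc hac => ?_⟩
  exact le_of_tendsto_of_tendsto' (((hlim x hx).const_smul a).add ((hlim y hy).const_smul c))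
    (hlim _ ((hf n).1 hx hy ha hc hac)) fun n => (hf n).2 hx hy ha hc hac

theorem MonotoneOn.of_tendsto {α ι : Type*} [Preorder α] {t : Set α} {l : Filter ι} [l.NeBot]
    {f : ι → α → ℝ} {g : α → ℝ} (hf : ∀ n, MonotoneOn (f n) t)
    (hlim : ∀ x ∈ t, Tendsto (fun n => f n x) l (nhds (g x))) : MonotoneOn g t :=
  fun x hx y hy hxy =>
    le_of_tendsto_of_tendsto' (hlim x hx) (hlim y hy) fun n => hf n hx hy hxy

end OrderLimits

section Integral

variable {E Ω : Type*} [MeasurableSpace Ω] {μ : Measure Ω} {f : E → Ω → ℝ}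

theorem ConcaveOn.integral [AddCommGroup E] [Module ℝ E] {s : Set E} (hs : Convex ℝ s)
    (hf : ∀ ω, ConcaveOn ℝ s (f · ω)) (hint : ∀ x ∈ s, Integrable (f x) μ) :
    ConcaveOn ℝ s fun x => ∫ ω, f x ω ∂μ := by
  refine ⟨hs, fun x hx y hy a c ha hc hac => ?_⟩
  simp only [smul_eq_mul]
  rw [← integral_const_mul, ← integral_const_mul,
    ← integral_add ((hint x hx).const_mul a) ((hint y hy).const_mul c)]
  exact integral_mono (((hint x hx).const_mul a).add ((hint y hy).const_mul c))
    (hint _ (hs hx hy ha hc hac)) fun ω => (hf ω).2 hx hy ha hc hac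

theorem MonotoneOn.integral [Preorder E] {t : Set E} (hf : ∀ ω, MonotoneOn (f · ω) t)
    (hint : ∀ x ∈ t, Integrable (f x) μ) : MonotoneOn (fun x => ∫ ω, f x ω ∂μ) t :=
  fun x hx y hy hxy => integral_mono (hint x hx) (hint y hy) fun ω => hf ω hx hy hxy

end Integral

section QuadraticForm

variable {ι : Type*} [Fintype ι]

theorem integrable_dotProduct_mulVec {μ : Measure (ι → ℝ)}
    (hmom : Integrable (fun n => ∑ i, (n i) ^ 2) μ) (M : Matrix ι ι ℝ) :
    Integrable (fun n => n ⬝ᵥ M *ᵥ n) μ := by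
  have hL2 : ∀ i, MemLp (fun n : ι → ℝ => n i) 2 μ := fun i =>
    (memLp_two_iff_integrable_sq (measurable_pi_apply i).aestronglyMeasurable).2 <|
      hmom.mono' ((measurable_pi_apply i).pow_const 2).aestronglyMeasurable
        (Eventually.of_forall fun n => by
          simpa using Finset.single_le_sum (fun k _ => sq_nonneg (n k)) (Finset.mem_univ i))
  simp only [dotProduct, mulVec, Finset.mul_sum]
  exact integrable_finsetSum _ fun i _ => integrable_finsetSum _ fun j _ => by
    simpa [mul_left_comm] using ((hL2 i).integrable_mul (hL2 j)).const_mul (M i j)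

theorem tendsto_dotProduct_mulVec {κ : Type*} {l : Filter κ} {M : κ → Matrix ι ι ℝ}
    {M₀ : Matrix ι ι ℝ} (hM : ∀ i j, Tendsto (fun t => M t i j) l (nhds (M₀ i j))) (v : ι → ℝ) :
    Tendsto (fun t => v ⬝ᵥ M t *ᵥ v) l (nhds (v ⬝ᵥ M₀ *ᵥ v)) := by
  have : Tendsto M l (nhds M₀) := tendsto_pi_nhds.2 fun i => tendsto_pi_nhds.2 (hM i)
  exact ((continuous_const.dotProduct (continuous_id.matrix_mulVec continuous_const)).tendsto
    M₀).comp this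

end QuadraticForm

section Riccati

variable {d : ℕ} (A Q : Matrix (Fin d) (Fin d) ℝ) (b : Fin d → ℝ) (γ r : ℝ)

def lqrStepCost (K : Matrix (Fin d) (Fin d) ℝ) (v : Fin d → ℝ) (u : ℝ) : ℝ :=
  v ⬝ᵥ Q *ᵥ v + r * u ^ 2 + γ * ((A *ᵥ v + u • b) ⬝ᵥ K *ᵥ (A *ᵥ v + u • b))

variable {A Q b γ r}

theorem dotProduct_mulVec_comm_of_isSymm {ι : Type*} [Fintype ι] {K : Matrix ι ι ℝ}
    (hK : K.IsSymm) (v w : ι → ℝ) : v ⬝ᵥ K *ᵥ w = w ⬝ᵥ K *ᵥ v := by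
  rw [dotProduct_mulVec, ← mulVec_transpose, hK.eq, dotProduct_comm]

theorem dotProduct_riccatiStep_mulVec {K : Matrix (Fin d) (Fin d) ℝ} (hK : K.IsSymm)
    (v : Fin d → ℝ) :
    v ⬝ᵥ riccatiStep A Q b γ r K *ᵥ v = v ⬝ᵥ Q *ᵥ v + γ * (A *ᵥ v ⬝ᵥ K *ᵥ (A *ᵥ v))
      - γ ^ 2 / (γ * (b ⬝ᵥ K *ᵥ b) + r) * (b ⬝ᵥ K *ᵥ (A *ᵥ v)) ^ 2 := by
  rw [riccatiStep, add_mulVec, dotProduct_add, Matrix.mul_assoc, ← mulVec_mulVec,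
    ← mulVec_mulVec, dotProduct_mulVec v Aᵀ, vecMul_transpose, sub_mulVec, dotProduct_sub,
    smul_mulVec, dotProduct_smul, smul_mulVec, dotProduct_smul, ← mulVec_mulVec,
    ← mulVec_mulVec, vecMulVec_mulVec, mulVec_smul, dotProduct_smul,
    dotProduct_mulVec_comm_of_isSymm hK (A *ᵥ v) b]
  simp only [smul_eq_mul, MulOpposite.smul_eq_mul_unop, MulOpposite.unop_op]
  ring

theorem lqrStepCost_eq_add_sq {K : Matrix (Fin d) (Fin d) ℝ} (hK : K.IsSymm)
    (ha : γ * (b ⬝ᵥ K *ᵥ b) + r ≠ 0) (v : Fin d → ℝ) (u : ℝ) :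
    lqrStepCost A Q b γ r K v u = v ⬝ᵥ riccatiStep A Q b γ r K *ᵥ v
      + ((γ * (b ⬝ᵥ K *ᵥ b) + r) * u + γ * (b ⬝ᵥ K *ᵥ (A *ᵥ v))) ^ 2
        / (γ * (b ⬝ᵥ K *ᵥ b) + r) := by
  rw [lqrStepCost, mulVec_add, dotProduct_add, add_dotProduct, add_dotProduct, mulVec_smul,
    dotProduct_smul, dotProduct_smul, smul_dotProduct, smul_dotProduct,
    dotProduct_mulVec_comm_of_isSymm hK (A *ᵥ v) b, dotProduct_riccatiStep_mulVec hK]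
  simp only [smul_eq_mul]
  field_simp
  ring

theorem isLeast_lqrStepCost {K : Matrix (Fin d) (Fin d) ℝ} (hK : K.PosSemidef) (hγ : 0 ≤ γ)
    (hr : 0 < r) (v : Fin d → ℝ) :
    IsLeast (Set.range (lqrStepCost A Q b γ r K v)) (v ⬝ᵥ riccatiStep A Q b γ r K *ᵥ v) := by
  have ha : 0 < γ * (b ⬝ᵥ K *ᵥ b) + r := by
    have hKb := hK.dotProduct_mulVec_nonneg b
    simp only [star_trivial] at hKb
    positivity
  have hsq := lqrStepCost_eq_add_sq (A := A) (Q := Q)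
    (isHermitian_iff_isSymm.1 hK.isHermitian) ha.ne' v
  refine ⟨⟨-(γ * (b ⬝ᵥ K *ᵥ (A *ᵥ v))) / (γ * (b ⬝ᵥ K *ᵥ b) + r), ?_⟩, ?_⟩
  · rw [hsq, mul_div_cancel₀ _ ha.ne']
    simp
  · rintro _ ⟨u, rfl⟩
    rw [hsq]
    exact le_add_of_nonneg_right (by positivity)

theorem riccatiStep_posSemidef {K : Matrix (Fin d) (Fin d) ℝ} (hQ : Q.PosSemidef)
    (hK : K.PosSemidef) (hγ : 0 ≤ γ) (hr : 0 < r) : (riccatiStep A Q b γ r K).PosSemidef := by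
  have hQs : Qᵀ = Q := (isHermitian_iff_isSymm.1 hQ.isHermitian).eq
  have hKs : Kᵀ = K := (isHermitian_iff_isSymm.1 hK.isHermitian).eq
  refine .of_dotProduct_mulVec_nonneg (isHermitian_iff_isSymm.2 ?_) fun v => ?_
  · simp only [IsSymm, riccatiStep, transpose_add, transpose_mul, transpose_sub, transpose_smul,
      transpose_transpose, transpose_vecMulVec, hQs, hKs, Matrix.mul_assoc]
  · obtain ⟨u, hu⟩ := (isLeast_lqrStepCost hK hγ hr v).1
    rw [star_trivial, ← hu, lqrStepCost]
    have hKw := hK.dotProduct_mulVec_nonneg (A *ᵥ v + u • b)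
    have hQv := hQ.dotProduct_mulVec_nonneg v
    simp only [star_trivial] at hKw hQv
    positivity

theorem riccatiIter_succ (t : ℕ) :
    riccatiIter A Q b γ r (t + 1) = riccatiStep A Q b γ r (riccatiIter A Q b γ r t) :=
  Function.iterate_succ_apply' _ _ _

theorem riccatiIter_posSemidef (hQ : Q.PosSemidef) (hγ : 0 ≤ γ) (hr : 0 < r) (t : ℕ) :
    (riccatiIter A Q b γ r t).PosSemidef := by
  induction t with
  | zero => exact hQ
  | succ t ih => rw [riccatiIter_succ]; exact riccatiStep_posSemidef hQ ih hγ hr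

theorem isLeast_lqrStepCost_riccatiIter (hQ : Q.PosSemidef) (hγ : 0 ≤ γ) (hr : 0 < r) (t : ℕ)
    (v : Fin d → ℝ) :
    IsLeast (Set.range fun u => lqrStepCost A Q b γ r (riccatiIter A Q b γ r t) v u)
      (v ⬝ᵥ riccatiIter A Q b γ r (t + 1) *ᵥ v) := by
  rw [riccatiIter_succ]
  exact isLeast_lqrStepCost (riccatiIter_posSemidef hQ hγ hr t) hγ hr v

theorem concaveOn_dotProduct_riccatiIter_mulVec (hQ : Q.PosSemidef) (hγ : 0 ≤ γ) (t : ℕ)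
    (v : Fin d → ℝ) :
    ConcaveOn ℝ (Set.Ioi (0 : ℝ)) fun r => v ⬝ᵥ riccatiIter A Q b γ r t *ᵥ v := by
  induction t generalizing v with
  | zero => exact concaveOn_const (v ⬝ᵥ Q *ᵥ v) (convex_Ioi 0)
  | succ t ih =>
    refine .of_isLeast_range (convex_Ioi 0) (fun u => ?_)
      fun r hr => isLeast_lqrStepCost_riccatiIter hQ hγ hr t v
    have hlin : ConcaveOn ℝ (Set.Ioi 0) fun r : ℝ => r * u ^ 2 :=
      ((concaveOn_id (convex_Ioi 0)).smul (sq_nonneg u)).congr fun r _ => mul_comm _ _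
    exact ((concaveOn_const _ (convex_Ioi 0)).add hlin).add ((ih _).smul hγ)

theorem monotoneOn_dotProduct_riccatiIter_mulVec (hQ : Q.PosSemidef) (hγ : 0 ≤ γ) (t : ℕ)
    (v : Fin d → ℝ) :
    MonotoneOn (fun r => v ⬝ᵥ riccatiIter A Q b γ r t *ᵥ v) (Set.Ioi (0 : ℝ)) := by
  induction t generalizing v with
  | zero => exact monotoneOn_const (c := v ⬝ᵥ Q *ᵥ v)
  | succ t ih =>
    refine .of_isLeast_range (fun u => ?_)
      fun r hr => isLeast_lqrStepCost_riccatiIter hQ hγ hr t v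
    exact (monotoneOn_const.add fun r _ s _ hrs => by gcongr).add
      fun r hr s hs hrs => mul_le_mul_of_nonneg_left (ih _ hr hs hrs) hγ

end Riccati

theorem optimal_cost_concave_nondecreasing_in_control_penalty_general
    (d : ℕ)
    (A Q : Matrix (Fin d) (Fin d) ℝ) (b : Fin d → ℝ) (hQ : Q.PosSemidef)
    (γ : ℝ) (hγ : γ ∈ Set.Ioo (0 : ℝ) 1)
    (μ : Measure (Fin d → ℝ))
    (hmom : Integrable (fun n => ∑ i, (n i) ^ 2) μ)
    (K : ℝ → Matrix (Fin d) (Fin d) ℝ)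
    (hconv : ∀ r > (0 : ℝ), ∀ i j : Fin d,
      Tendsto (fun t => riccatiIter A Q b γ r t i j) atTop (nhds (K r i j))) :
    ∀ x : Fin d → ℝ,
      ConcaveOn ℝ (Set.Ioi (0 : ℝ))
        (fun r => x ⬝ᵥ (K r).mulVec x + γ / (1 - γ) * ∫ n, n ⬝ᵥ (K r).mulVec n ∂μ) ∧
      MonotoneOn
        (fun r => x ⬝ᵥ (K r).mulVec x + γ / (1 - γ) * ∫ n, n ⬝ᵥ (K r).mulVec n ∂μ)
        (Set.Ioi (0 : ℝ)) := by
  have hlim (v : Fin d → ℝ) : ∀ r ∈ Set.Ioi (0 : ℝ),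
      Tendsto (fun t => v ⬝ᵥ riccatiIter A Q b γ r t *ᵥ v) atTop (nhds (v ⬝ᵥ K r *ᵥ v)) :=
    fun r hr => tendsto_dotProduct_mulVec (hconv r hr) v
  have hconc (v : Fin d → ℝ) : ConcaveOn ℝ (Set.Ioi 0) fun r => v ⬝ᵥ K r *ᵥ v :=
    .of_tendsto (fun t => concaveOn_dotProduct_riccatiIter_mulVec hQ hγ.1.le t v) (hlim v)
  have hmono (v : Fin d → ℝ) : MonotoneOn (fun r => v ⬝ᵥ K r *ᵥ v) (Set.Ioi 0) :=
    .of_tendsto (fun t => monotoneOn_dotProduct_riccatiIter_mulVec hQ hγ.1.le t v) (hlim v)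
  have hint : ∀ r ∈ Set.Ioi (0 : ℝ), Integrable (fun n => n ⬝ᵥ K r *ᵥ n) μ :=
    fun r _ => integrable_dotProduct_mulVec hmom (K r)
  have hc : 0 ≤ γ / (1 - γ) := div_nonneg hγ.1.le (sub_nonneg.2 hγ.2.le)
  intro x
  refine ⟨(hconc x).add ((ConcaveOn.integral (convex_Ioi 0) hconc hint).smul hc),
    (hmono x).add fun r hr s hs hrs => ?_⟩
  exact mul_le_mul_of_nonneg_left (MonotoneOn.integral hmono hint hr hs hrs) hc

/-- If for every `r > 0` the Riccati iterates `K_t(r)` converge entrywise to `K(r)`, then for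
every `x` the optimal-cost map `r ↦ J*_r(x) = xᵀK(r)x + (γ/(1−γ)) ∫ nᵀK(r)n dμ` is concave and
nondecreasing on `(0,∞)`. -/
theorem optimal_cost_concave_nondecreasing_in_control_penalty
    (d : ℕ) (hd : 1 ≤ d)
    (A Q : Matrix (Fin d) (Fin d) ℝ) (b : Fin d → ℝ) (hQ : Q.PosSemidef)
    (γ : ℝ) (hγ : γ ∈ Set.Ioo (0 : ℝ) 1)
    (μ : Measure (Fin d → ℝ)) [IsProbabilityMeasure μ]
    (hmean : ∀ i, ∫ n, n i ∂μ = 0)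
    (hmom : Integrable (fun n => ∑ i, (n i) ^ 2) μ)
    (K : ℝ → Matrix (Fin d) (Fin d) ℝ)
    (hconv : ∀ r > (0 : ℝ), ∀ i j : Fin d,
      Tendsto (fun t => riccatiIter A Q b γ r t i j) atTop (nhds (K r i j))) :
    ∀ x : Fin d → ℝ,
      ConcaveOn ℝ (Set.Ioi (0 : ℝ))
        (fun r => x ⬝ᵥ (K r).mulVec x + γ / (1 - γ) * ∫ n, n ⬝ᵥ (K r).mulVec n ∂μ) ∧
      MonotoneOn
        (fun r => x ⬝ᵥ (K r).mulVec x + γ / (1 - γ) * ∫ n, n ⬝ᵥ (K r).mulVec n ∂μ)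
        (Set.Ioi (0 : ℝ)) :=
  optimal_cost_concave_nondecreasing_in_control_penalty_general d A Q b hQ γ hγ μ hmom K hconv

end
end

section
/- Assume every complex eigenvalue of F has modulus strictly less than 1. Then (1) along the equilibrium trajectory x_{t+1} = F x_t with x_0 = x₀ and u^i_t = −p_iᵀx_t, player i's cost equals (1/2) x₀ᵀK^i x₀ for i ∈ {1,2}; and (2) the feedback pair is a Nash equilibrium: for each i ∈ {1,2} and every deviating control sequence (ũ_t)_{t≥0} of real numbers with resulting state trajectory x̃_{t+1} = (A − b^{−i} p_{−i}ᵀ) x̃_t + b^i ũ_t, x̃₀ = x₀, satisfying γ^T x̃_TᵀK^i x̃_T → 0 as T → ∞, one has (1/2) Σ_{t=0}^∞ γ^t ( x̃_tᵀQ_i x̃_t + r ũ_t² ) ≥ (1/2) x₀ᵀK^i x₀, where the left side is a series of nonnegative terms (possibly +∞). -/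
/-!
Given the other player's feedback `u^j = -p_jᵀx`, player `i` faces a single-agent discounted
LQ problem with dynamics `x' = G x + u bⁱ`, `G = A - bʲp_jᵀ`, and the coupled Riccati relations
say precisely that `p_i` is the optimal gain of that problem, with value matrix `Kⁱ`.
Completing the square gives, for every state `x` and control `u`,
`xᵀQx + r u² + γ x'ᵀKx' - xᵀKx = (r + γ bᵀKb) (u + pᵀx)² ≥ 0`, with equality for `u = -pᵀx`.
Multiplying by `γᵗ` and telescoping, the cost of any deviation is at least
`x₀ᵀKx₀ - lim γ^T x_TᵀKx_T`, which is `x₀ᵀKx₀` under the transversality condition; along the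
equilibrium trajectory the inequality is an equality, and the boundary term vanishes because
`Fᵗ → 0` when the spectral radius of `F` is below one (Gelfand's formula).
-/

open Matrix Filter Topology

noncomputable section

def gameF {d : ℕ} (A : Matrix (Fin d) (Fin d) ℝ) (b p : Fin 2 → Fin d → ℝ) :
    Matrix (Fin d) (Fin d) ℝ :=
  A - vecMulVec (b 0) (p 0) - vecMulVec (b 1) (p 1)

/-- The coupled Riccati relations of the two-player linear–quadratic dynamic game:
`γ (bⁱ)ᵀKⁱA = (r + γ(bⁱ)ᵀKⁱbⁱ) pᵢᵀ + γ(bⁱ)ᵀKⁱb⁻ⁱ p₋ᵢᵀ` and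
`Kⁱ = γ FᵀKⁱF + r pᵢpᵢᵀ + Qᵢ`, with each `Kⁱ` symmetric positive semidefinite. -/
def coupledRiccati {d : ℕ} (A : Matrix (Fin d) (Fin d) ℝ) (b : Fin 2 → Fin d → ℝ)
    (Q : Fin 2 → Matrix (Fin d) (Fin d) ℝ) (r γ : ℝ)
    (p : Fin 2 → Fin d → ℝ) (K : Fin 2 → Matrix (Fin d) (Fin d) ℝ) : Prop :=
  (∀ i, (K i).PosSemidef) ∧
  (∀ i j, j ≠ i →
    γ • Matrix.vecMul (Matrix.vecMul (b i) (K i)) A =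
      (r + γ * (b i ⬝ᵥ (K i).mulVec (b i))) • p i +
        (γ * (b i ⬝ᵥ (K i).mulVec (b j))) • p j) ∧
  (∀ i, K i = γ • ((gameF A b p)ᵀ * K i * gameF A b p) + r • vecMulVec (p i) (p i) + Q i)

theorem spectrum.tendsto_pow_atTop_nhds_zero_of_spectralRadius_lt_one {A : Type*} [NormedRing A]
    [NormedAlgebra ℂ A] [CompleteSpace A] {a : A} (ha : spectralRadius ℂ a < 1) :
    Tendsto (a ^ ·) atTop (𝓝 0) := by
  obtain ⟨ρ, hρa, hρ1⟩ := ENNReal.lt_iff_exists_nnreal_btwn.mp ha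
  have hbound : ∀ᶠ n : ℕ in atTop, ‖a ^ n‖ ≤ (ρ : ℝ) ^ n := by
    filter_upwards [(pow_norm_pow_one_div_tendsto_nhds_spectralRadius a).eventually_lt_const hρa,
      eventually_gt_atTop 0] with n hn hn0
    rw [ENNReal.ofReal_lt_coe_iff (by positivity), one_div,
      Real.rpow_inv_lt_iff_of_pos (norm_nonneg _) ρ.coe_nonneg (by positivity),
      Real.rpow_natCast] at hn
    exact hn.le
  exact squeeze_zero_norm' hbound
    (tendsto_pow_atTop_nhds_zero_of_lt_one ρ.coe_nonneg (by exact_mod_cast hρ1))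

theorem spectrum.tendsto_pow_atTop_nhds_zero_of_forall_norm_lt_one {A : Type*} [NormedRing A]
    [NormedAlgebra ℂ A] [CompleteSpace A] {a : A} (ha : ∀ z ∈ spectrum ℂ a, ‖z‖ < 1) :
    Tendsto (a ^ ·) atTop (𝓝 0) := by
  rcases subsingleton_or_nontrivial A with hA | hA
  · simp [Subsingleton.elim _ (0 : A)]
  refine tendsto_pow_atTop_nhds_zero_of_spectralRadius_lt_one ?_
  simpa using spectrum.spectralRadius_lt_of_forall_lt (r := 1) a
    fun z hz => by simpa [← NNReal.coe_lt_coe] using ha z hz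

theorem Matrix.tendsto_pow_atTop_nhds_zero_of_forall_norm_lt_one {n : Type*} [Fintype n]
    [DecidableEq n] {M : Matrix n n ℝ} (hM : ∀ z ∈ spectrum ℂ (M.map Complex.ofReal), ‖z‖ < 1) :
    Tendsto (M ^ ·) atTop (𝓝 0) := by
  -- the `L∞` operator norm induces the product topology of `Matrix n n ℂ`
  let _ := Matrix.linftyOpNormedRing (n := n) (α := ℂ)
  let _ := Matrix.linftyOpNormedAlgebra (n := n) (R := ℂ) (α := ℂ)
  have : CompleteSpace (Matrix n n ℂ) := FiniteDimensional.complete ℂ _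
  have hre : Continuous fun N : Matrix n n ℂ => N.map Complex.re :=
    continuous_id.matrix_map Complex.continuous_re
  convert (hre.tendsto 0).comp (spectrum.tendsto_pow_atTop_nhds_zero_of_forall_norm_lt_one hM)
    using 2 with k
  · have hpow : M.map Complex.ofReal ^ k = (M ^ k).map Complex.ofReal :=
      (map_pow Complex.ofRealHom.mapMatrix M k).symm
    ext i j
    simp [hpow]
  · simp

theorem hasSum_of_eq_sub_succ {f w : ℕ → ℝ} (hf : ∀ t, 0 ≤ f t) (h : ∀ t, f t = w t - w (t + 1))
    (hw : Tendsto w atTop (𝓝 0)) : HasSum f (w 0) := by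
  have hpartial (T : ℕ) : ∑ t ∈ Finset.range T, f t = w 0 - w T :=
    (Finset.sum_congr rfl fun t _ => h t).trans (Finset.sum_range_sub' w T)
  rw [hasSum_iff_tendsto_nat_of_nonneg hf]
  simpa [hpartial] using tendsto_const_nhds.sub hw

theorem ofReal_le_tsum_of_sub_succ_le {f w : ℕ → ℝ} (hf : ∀ t, 0 ≤ f t)
    (h : ∀ t, w t - w (t + 1) ≤ f t) (hw : Tendsto w atTop (𝓝 0)) :
    ENNReal.ofReal (w 0) ≤ ∑' t, ENNReal.ofReal (f t) := by
  have hpartial (T : ℕ) : ENNReal.ofReal (w 0 - w T) ≤ ∑' t, ENNReal.ofReal (f t) :=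
    calc ENNReal.ofReal (w 0 - w T)
        ≤ ENNReal.ofReal (∑ t ∈ Finset.range T, f t) := by
          rw [← Finset.sum_range_sub']
          exact ENNReal.ofReal_le_ofReal (Finset.sum_le_sum fun t _ => h t)
      _ = ∑ t ∈ Finset.range T, ENNReal.ofReal (f t) :=
          ENNReal.ofReal_sum_of_nonneg fun t _ => hf t
      _ ≤ ∑' t, ENNReal.ofReal (f t) := ENNReal.sum_le_tsum _
  have hlim : Tendsto (fun T => ENNReal.ofReal (w 0 - w T)) atTop (𝓝 (ENNReal.ofReal (w 0))) := by
    simpa using ENNReal.tendsto_ofReal (tendsto_const_nhds.sub hw)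
  exact le_of_tendsto' hlim hpartial

section QuadraticForm

variable {n R : Type*} [Fintype n] [CommRing R]

theorem Matrix.IsSymm.dotProduct_mulVec_comm {K : Matrix n n R} (hK : K.IsSymm) (x y : n → R) :
    x ⬝ᵥ K *ᵥ y = y ⬝ᵥ K *ᵥ x := by
  rw [dotProduct_mulVec, ← hK.eq, vecMul_transpose, dotProduct_comm, hK.eq]

theorem Matrix.IsSymm.dotProduct_mulVec_add_smul {K : Matrix n n R} (hK : K.IsSymm)
    (y b : n → R) (u : R) :
    (y + u • b) ⬝ᵥ K *ᵥ (y + u • b) =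
      y ⬝ᵥ K *ᵥ y + 2 * u * (b ⬝ᵥ K *ᵥ y) + u ^ 2 * (b ⬝ᵥ K *ᵥ b) := by
  simp only [mulVec_add, mulVec_smul, dotProduct_add, add_dotProduct, dotProduct_smul,
    smul_dotProduct, smul_eq_mul, hK.dotProduct_mulVec_comm y b]
  ring

theorem dotProduct_mulVec_eq_of_lyapunov {F K Q : Matrix n n R} {p : n → R} {r γ : R}
    (hlyap : K = γ • (Fᵀ * K * F) + r • vecMulVec p p + Q) (x : n → R) :
    x ⬝ᵥ K *ᵥ x = γ * (F *ᵥ x ⬝ᵥ K *ᵥ (F *ᵥ x)) + r * (p ⬝ᵥ x) ^ 2 + x ⬝ᵥ Q *ᵥ x := by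
  conv_lhs => rw [hlyap]
  simp only [add_mulVec, smul_mulVec, vecMulVec_mulVec, op_smul_eq_smul, dotProduct_add,
    dotProduct_smul, smul_eq_mul, ← mulVec_mulVec, dotProduct_mulVec x Fᵀ, vecMul_transpose,
    dotProduct_comm x p]
  ring

theorem completing_square_of_riccati {G K Q : Matrix n n R} {b p : n → R} {r γ : R}
    (hK : K.IsSymm) (hgain : γ • (b ᵥ* K ᵥ* G) = (r + γ * (b ⬝ᵥ K *ᵥ b)) • p)
    (hlyap : K = γ • ((G - vecMulVec b p)ᵀ * K * (G - vecMulVec b p)) + r • vecMulVec p p + Q)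
    (x : n → R) (u : R) :
    x ⬝ᵥ Q *ᵥ x + r * u ^ 2 + γ * ((G *ᵥ x + u • b) ⬝ᵥ K *ᵥ (G *ᵥ x + u • b)) - x ⬝ᵥ K *ᵥ x =
      (r + γ * (b ⬝ᵥ K *ᵥ b)) * (u + p ⬝ᵥ x) ^ 2 := by
  have hclosed : (G - vecMulVec b p) *ᵥ x = G *ᵥ x + (-(p ⬝ᵥ x)) • b := by
    rw [sub_mulVec, vecMulVec_mulVec, op_smul_eq_smul, neg_smul, sub_eq_add_neg]
  have hvalue := dotProduct_mulVec_eq_of_lyapunov hlyap x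
  have hcross : γ * (b ⬝ᵥ K *ᵥ (G *ᵥ x)) = (r + γ * (b ⬝ᵥ K *ᵥ b)) * (p ⬝ᵥ x) := by
    simpa only [smul_dotProduct, smul_eq_mul, dotProduct_mulVec, vecMul_vecMul] using
      congrArg (· ⬝ᵥ x) hgain
  rw [hclosed, hK.dotProduct_mulVec_add_smul] at hvalue
  rw [hK.dotProduct_mulVec_add_smul]
  linear_combination (-1 : R) * hvalue + (2 * (u + p ⬝ᵥ x)) * hcross

theorem gain_of_coupled_gain {A K : Matrix n n R} {bi bj p q : n → R} {r γ : R}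
    (h : γ • (bi ᵥ* K ᵥ* A) = (r + γ * (bi ⬝ᵥ K *ᵥ bi)) • p + (γ * (bi ⬝ᵥ K *ᵥ bj)) • q) :
    γ • (bi ᵥ* K ᵥ* (A - vecMulVec bj q)) = (r + γ * (bi ⬝ᵥ K *ᵥ bi)) • p := by
  rw [vecMul_sub, vecMul_vecMulVec, smul_sub, h, ← dotProduct_mulVec, smul_smul,
    add_sub_cancel_right]

end QuadraticForm

theorem Matrix.PosSemidef.dotProduct_mulVec_self_nonneg {n : Type*} [Fintype n]
    {Q : Matrix n n ℝ} (hQ : Q.PosSemidef) (x : n → ℝ) : 0 ≤ x ⬝ᵥ Q *ᵥ x := by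
  simpa using hQ.dotProduct_mulVec_nonneg x

theorem gameF_eq_of_ne {d : ℕ} (A : Matrix (Fin d) (Fin d) ℝ) (b p : Fin 2 → Fin d → ℝ)
    {i j : Fin 2} (hji : j ≠ i) :
    gameF A b p = A - vecMulVec (b j) (p j) - vecMulVec (b i) (p i) := by
  fin_cases i <;> fin_cases j <;> simp_all [gameF, sub_right_comm]

theorem hasSum_discounted_cost_of_lyapunov {n : Type*} [Fintype n] [DecidableEq n]
    {F K Q : Matrix n n ℝ} {p : n → ℝ} {r γ : ℝ} (hQ : Q.PosSemidef) (hr : 0 ≤ r)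
    (hγ₀ : 0 ≤ γ) (hγ₁ : γ < 1) (hlyap : K = γ • (Fᵀ * K * F) + r • vecMulVec p p + Q)
    (hF : Tendsto (F ^ ·) atTop (𝓝 0)) (x₀ : n → ℝ) :
    HasSum (fun t : ℕ => (1 / 2 : ℝ) * γ ^ t *
        ((F ^ t) *ᵥ x₀ ⬝ᵥ Q *ᵥ ((F ^ t) *ᵥ x₀) + r * (p ⬝ᵥ (F ^ t) *ᵥ x₀) ^ 2))
      ((1 / 2 : ℝ) * (x₀ ⬝ᵥ K *ᵥ x₀)) := by
  set x : ℕ → n → ℝ := fun t => (F ^ t) *ᵥ x₀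
  have hx : Tendsto x atTop (𝓝 0) := by
    simpa [Function.comp_def] using
      ((continuous_id.matrix_mulVec continuous_const).tendsto 0).comp hF
  have hvalue : Tendsto (fun t => x t ⬝ᵥ K *ᵥ x t) atTop (𝓝 0) := by
    simpa [Function.comp_def] using
      ((continuous_id.dotProduct (continuous_const.matrix_mulVec continuous_id)).tendsto 0).comp hx
  convert hasSum_of_eq_sub_succ (w := fun t => (1 / 2 : ℝ) * (γ ^ t * (x t ⬝ᵥ K *ᵥ x t)))
    (fun t => ?_) (fun t => ?_) ?_ using 1
  · simp [x]
  · have := hQ.dotProduct_mulVec_self_nonneg (x t)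
    positivity
  · rw [show x (t + 1) = F *ᵥ x t by simp [x, pow_succ', mulVec_mulVec],
      dotProduct_mulVec_eq_of_lyapunov hlyap (x t), pow_succ]
    ring
  · simpa using ((tendsto_pow_atTop_nhds_zero_of_lt_one hγ₀ hγ₁).mul hvalue).const_mul (1 / 2 : ℝ)

theorem ofReal_le_tsum_discounted_cost_of_riccati {n : Type*} [Fintype n] {G K Q : Matrix n n ℝ}
    {b p : n → ℝ} {r γ : ℝ} (hQ : Q.PosSemidef) (hK : K.PosSemidef) (hr : 0 ≤ r) (hγ : 0 ≤ γ)
    (hgain : γ • (b ᵥ* K ᵥ* G) = (r + γ * (b ⬝ᵥ K *ᵥ b)) • p)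
    (hlyap : K = γ • ((G - vecMulVec b p)ᵀ * K * (G - vecMulVec b p)) + r • vecMulVec p p + Q)
    {u : ℕ → ℝ} {x : ℕ → n → ℝ} (hdyn : ∀ t, x (t + 1) = G *ᵥ x t + u t • b)
    (htrans : Tendsto (fun T => γ ^ T * (x T ⬝ᵥ K *ᵥ x T)) atTop (𝓝 0)) :
    ENNReal.ofReal ((1 / 2 : ℝ) * (x 0 ⬝ᵥ K *ᵥ x 0)) ≤
      ∑' t, ENNReal.ofReal ((1 / 2 : ℝ) * γ ^ t * (x t ⬝ᵥ Q *ᵥ x t + r * u t ^ 2)) := by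
  have hK_symm : K.IsSymm := isHermitian_iff_isSymm.mp hK.isHermitian
  have hgain_nonneg : 0 ≤ r + γ * (b ⬝ᵥ K *ᵥ b) := by
    have := hK.dotProduct_mulVec_self_nonneg b
    positivity
  refine le_of_eq_of_le (by rw [pow_zero, one_mul]) (ofReal_le_tsum_of_sub_succ_le
    (w := fun t => (1 / 2 : ℝ) * (γ ^ t * (x t ⬝ᵥ K *ᵥ x t))) (fun t => ?_) (fun t => ?_)
    (by simpa using htrans.const_mul (1 / 2 : ℝ)))
  · have := hQ.dotProduct_mulVec_self_nonneg (x t)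
    positivity
  · have hsquare := completing_square_of_riccati hK_symm hgain hlyap (x t) (u t)
    rw [← hdyn] at hsquare
    have : 0 ≤ γ ^ t * ((r + γ * (b ⬝ᵥ K *ᵥ b)) * (u t + p ⬝ᵥ x t) ^ 2) := by positivity
    rw [pow_succ]
    linear_combination (-1 / 2 * γ ^ t) * hsquare + (1 / 2 : ℝ) * this

theorem feedback_nash_equilibrium_general
    (d : ℕ)
    (A : Matrix (Fin d) (Fin d) ℝ) (b : Fin 2 → Fin d → ℝ)
    (Q : Fin 2 → Matrix (Fin d) (Fin d) ℝ) (hQ : ∀ i, (Q i).PosSemidef)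
    (r : ℝ) (hr : 0 < r)
    (γ : ℝ) (hγ : γ ∈ Set.Ioo (0 : ℝ) 1)
    (x₀ : Fin d → ℝ)
    (p : Fin 2 → Fin d → ℝ) (K : Fin 2 → Matrix (Fin d) (Fin d) ℝ)
    (hcr : coupledRiccati A b Q r γ p K)
    (hstable : ∀ z ∈ spectrum ℂ ((gameF A b p).map Complex.ofReal), ‖z‖ < 1) :
    -- (1) the equilibrium cost of each player
    (∀ i : Fin 2,
      HasSum
        (fun t : ℕ => (1 / 2 : ℝ) * γ ^ t *
          (((gameF A b p) ^ t).mulVec x₀ ⬝ᵥ (Q i).mulVec (((gameF A b p) ^ t).mulVec x₀) +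
            r * (p i ⬝ᵥ ((gameF A b p) ^ t).mulVec x₀) ^ 2))
        ((1 / 2 : ℝ) * (x₀ ⬝ᵥ (K i).mulVec x₀))) ∧
    -- (2) Nash property: no unilateral deviation can lower a player's cost
    (∀ i j : Fin 2, j ≠ i →
      ∀ (ut : ℕ → ℝ) (xt : ℕ → Fin d → ℝ),
        xt 0 = x₀ →
        (∀ t, xt (t + 1) = (A - vecMulVec (b j) (p j)).mulVec (xt t) + ut t • b i) →
        Tendsto (fun T => γ ^ T * (xt T ⬝ᵥ (K i).mulVec (xt T))) atTop (nhds 0) →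
        ENNReal.ofReal ((1 / 2 : ℝ) * (x₀ ⬝ᵥ (K i).mulVec x₀)) ≤
          ∑' t : ℕ, ENNReal.ofReal
            ((1 / 2 : ℝ) * γ ^ t *
              (xt t ⬝ᵥ (Q i).mulVec (xt t) + r * (ut t) ^ 2))) := by
  obtain ⟨hK, hgain, hlyap⟩ := hcr
  refine ⟨fun i => hasSum_discounted_cost_of_lyapunov (hQ i) hr.le hγ.1.le hγ.2 (hlyap i)
    (Matrix.tendsto_pow_atTop_nhds_zero_of_forall_norm_lt_one hstable) x₀, ?_⟩
  intro i j hji ut xt hx₀ hdyn htrans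
  rw [← hx₀]
  refine ofReal_le_tsum_discounted_cost_of_riccati (hQ i) (hK i) hr.le hγ.1.le
    (gain_of_coupled_gain (hgain i j hji)) ?_ hdyn htrans
  rw [← gameF_eq_of_ne A b p hji]
  exact hlyap i

/-- Feedback Nash equilibrium of the two-player LQ dynamic game: along the equilibrium
trajectory `x_{t+1} = F x_t`, player `i`'s cost equals `(1/2) x₀ᵀKⁱx₀`; and no player can
improve by a unilateral deviation (with the transversality condition
`γ^T x̃_TᵀKⁱx̃_T → 0`). -/
theorem feedback_nash_equilibrium
    (d : ℕ) (hd : 1 ≤ d)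
    (A : Matrix (Fin d) (Fin d) ℝ) (b : Fin 2 → Fin d → ℝ)
    (Q : Fin 2 → Matrix (Fin d) (Fin d) ℝ) (hQ : ∀ i, (Q i).PosSemidef)
    (r : ℝ) (hr : 0 < r)
    (γ : ℝ) (hγ : γ ∈ Set.Ioo (0 : ℝ) 1)
    (x₀ : Fin d → ℝ)
    (p : Fin 2 → Fin d → ℝ) (K : Fin 2 → Matrix (Fin d) (Fin d) ℝ)
    (hcr : coupledRiccati A b Q r γ p K)
    (hstable : ∀ z ∈ spectrum ℂ ((gameF A b p).map Complex.ofReal), ‖z‖ < 1) :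
    -- (1) the equilibrium cost of each player
    (∀ i : Fin 2,
      HasSum
        (fun t : ℕ => (1 / 2 : ℝ) * γ ^ t *
          (((gameF A b p) ^ t).mulVec x₀ ⬝ᵥ (Q i).mulVec (((gameF A b p) ^ t).mulVec x₀) +
            r * (p i ⬝ᵥ ((gameF A b p) ^ t).mulVec x₀) ^ 2))
        ((1 / 2 : ℝ) * (x₀ ⬝ᵥ (K i).mulVec x₀))) ∧
    -- (2) Nash property: no unilateral deviation can lower a player's cost
    (∀ i j : Fin 2, j ≠ i →
      ∀ (ut : ℕ → ℝ) (xt : ℕ → Fin d → ℝ),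
        xt 0 = x₀ →
        (∀ t, xt (t + 1) = (A - vecMulVec (b j) (p j)).mulVec (xt t) + ut t • b i) →
        Tendsto (fun T => γ ^ T * (xt T ⬝ᵥ (K i).mulVec (xt T))) atTop (nhds 0) →
        ENNReal.ofReal ((1 / 2 : ℝ) * (x₀ ⬝ᵥ (K i).mulVec x₀)) ≤
          ∑' t : ℕ, ENNReal.ofReal
            ((1 / 2 : ℝ) * γ ^ t *
              (xt t ⬝ᵥ (Q i).mulVec (xt t) + r * (ut t) ^ 2))) :=
  feedback_nash_equilibrium_general d A b Q hQ r hr γ hγ x₀ p K hcr hstable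

end
end
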